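/- arXiv:2201.05783 — 2 statements merged into one kernel-verified Lean document; each statement's English description precedes it below -/
import Mathlib

section
/- A non-empty graph G has strict bramble number at most 1 if and only if G is acyclic (a forest). -/
open SimpleGraph

section Defs

variable {V W : Type}

/-- `X` covers the family `B`: every member of `B` meets `X`. -/
def Covers (X : Set V) (B : Set (Set V)) : Prop := ∀ S ∈ B, (S ∩ X).Nonempty

/-- A strict bramble: a family of connected vertex sets, pairwise intersecting. -/
def IsStrictBramble (G : SimpleGraph V) (B : Set (Set V)) : Prop :=
  (∀ S ∈ B, (G.induce S).Connected) ∧ ∀ S ∈ B, ∀ S' ∈ B, (S ∩ S').Nonempty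

/-- Two vertex sets touch: they intersect or are joined by an edge. -/
def Touches (G : SimpleGraph V) (S S' : Set V) : Prop :=
  (S ∩ S').Nonempty ∨ ∃ u ∈ S, ∃ v ∈ S', G.Adj u v

/-- A bramble: a family of connected vertex sets, pairwise touching. -/
def IsBramble (G : SimpleGraph V) (B : Set (Set V)) : Prop :=
  (∀ S ∈ B, (G.induce S).Connected) ∧ ∀ S ∈ B, ∀ S' ∈ B, Touches G S S'

/-- The order of a family of vertex sets: minimum size of a covering set. -/
noncomputable def brOrder (B : Set (Set V)) : ℕ :=
  sInf {n | ∃ X : Set V, Covers X B ∧ X.ncard = n}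

/-- The strict bramble number. -/
noncomputable def sbn (G : SimpleGraph V) : ℕ :=
  sSup {n | ∃ B, IsStrictBramble G B ∧ brOrder B = n}

/-- The bramble number. -/
noncomputable def bn (G : SimpleGraph V) : ℕ :=
  sSup {n | ∃ B, IsBramble G B ∧ brOrder B = n}

/-- `S` is an `(x,y)`-separator: `x, y ∉ S` and `x, y` lie in different
components of `G − S`. -/
def SepPair (G : SimpleGraph V) (x y : V) (S : Set V) : Prop :=
  x ∉ S ∧ y ∉ S ∧ ∀ (hx : x ∈ Sᶜ) (hy : y ∈ Sᶜ),
    ¬ (G.induce Sᶜ).Reachable ⟨x, hx⟩ ⟨y, hy⟩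

/-- `S` is an `(X,Y)`-separator of `G`. -/
def IsSetSeparator (G : SimpleGraph V) (X Y S : Set V) : Prop :=
  ∀ x ∈ X \ S, ∀ y ∈ Y \ S, SepPair G x y S

/-- A lenient tree decomposition of `G`. -/
structure LenientTD (G : SimpleGraph V) where
  ι : Type
  T : SimpleGraph ι
  tree : T.IsTree
  χ : ι → Set V
  covers : ∀ v : V, ∃ t, v ∈ χ t
  edge_mem : ∀ u v : V, G.Adj u v →
    ∃ t t', (t = t' ∨ T.Adj t t') ∧ u ∈ χ t ∪ χ t' ∧ v ∈ χ t ∪ χ t'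
  trace_conn : ∀ v : V, (T.induce {t | v ∈ χ t}).Connected

/-- The width of a lenient tree decomposition is at most `k`. -/
def LenientTD.WidthLE {G : SimpleGraph V} (D : LenientTD G) (k : ℕ) : Prop :=
  ∀ t, (D.χ t).ncard ≤ k

/-- An ordinary tree decomposition of `G`. -/
structure TreeDecomp (G : SimpleGraph V) where
  ι : Type
  T : SimpleGraph ι
  tree : T.IsTree
  χ : ι → Set V
  covers : ∀ v : V, ∃ t, v ∈ χ t
  edge_mem : ∀ u v : V, G.Adj u v → ∃ t, u ∈ χ t ∧ v ∈ χ t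
  trace_conn : ∀ v : V, (T.induce {t | v ∈ χ t}).Connected

/-- Treewidth: minimum over tree decompositions of (max bag size − 1). -/
noncomputable def tw (G : SimpleGraph V) : ℕ :=
  sInf {k | ∃ D : TreeDecomp G, ∀ t, (D.χ t).ncard ≤ k + 1}

/-- A minor model of `H` in `G`. -/
def IsMinorModel (H : SimpleGraph W) (G : SimpleGraph V) (μ : W → Set V) : Prop :=
  (∀ w, (G.induce (μ w)).Connected) ∧
  (∀ w w', w ≠ w' → μ w ∩ μ w' = ∅) ∧
  (∀ w w', H.Adj w w' → ∃ u ∈ μ w, ∃ v ∈ μ w', G.Adj u v)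

/-- `H` is a minor of `G`. -/
def IsMinorOf (H : SimpleGraph W) (G : SimpleGraph V) : Prop :=
  ∃ μ : W → Set V, IsMinorModel H G μ

/-- The lexicographic product `T · K_k`. -/
def lexK {ι : Type} (T : SimpleGraph ι) (k : ℕ) : SimpleGraph (ι × Fin k) where
  Adj a b := T.Adj a.1 b.1 ∨ (a.1 = b.1 ∧ a.2 ≠ b.2)
  symm := ⟨by
    rintro a b (h | ⟨h1, h2⟩)
    · exact Or.inl h.symm
    · exact Or.inr ⟨h1.symm, h2.symm⟩⟩
  loopless := ⟨by
    rintro a (h | ⟨_, h2⟩)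
    · exact T.loopless.irrefl _ h
    · exact h2 rfl⟩

/-- The lexicographic tree product number. -/
noncomputable def ltp (G : SimpleGraph V) : ℕ :=
  sInf {m | ∃ (ι : Type) (T : SimpleGraph ι), T.IsTree ∧ IsMinorOf G (lexK T m)}

/-- The `(T,χ)`-completion of `G`: make each union of two close bags a clique. -/
def LenientTD.completion {G : SimpleGraph V} (D : LenientTD G) : SimpleGraph V where
  Adj u v := u ≠ v ∧ ∃ t t', (t = t' ∨ D.T.Adj t t') ∧
    u ∈ D.χ t ∪ D.χ t' ∧ v ∈ D.χ t ∪ D.χ t'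
  symm := ⟨by
    rintro u v ⟨hne, t, t', hc, hu, hv⟩
    exact ⟨hne.symm, t, t', hc, hv, hu⟩⟩
  loopless := ⟨fun u h => h.1 rfl⟩

/-- `G` is chordal: every cycle of length at least four has a chord. -/
def IsChordal (G : SimpleGraph V) : Prop :=
  ∀ (v : V) (w : G.Walk v v), w.IsCycle → 4 ≤ w.length →
    ∃ x ∈ w.support, ∃ y ∈ w.support, G.Adj x y ∧ s(x, y) ∉ w.edges

end Defs

/-! Connected vertex sets of a forest have the Helly property. Two meeting ones meet in a connected
set, since the unique path between two vertices lies in every connected set containing both; and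
three pairwise meeting ones share a vertex. Intersecting the members one at a time, every finite
strict bramble of a forest is therefore covered by a single vertex. Conversely, a cycle `v u w ⋯ v`
gives the strict bramble `{v, u}`, `{u, w}`, `{w, ⋯, v}`, which no single vertex covers. -/

namespace SimpleGraph

variable {V : Type} {G : SimpleGraph V} {s t r : Set V}

lemma exists_walk_support_subset_of_connected_induce (hs : (G.induce s).Connected) {u v : V}
    (hu : u ∈ s) (hv : v ∈ s) : ∃ p : G.Walk u v, ∀ x ∈ p.support, x ∈ s := by
  obtain ⟨p⟩ := hs.preconnected ⟨u, hu⟩ ⟨v, hv⟩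
  have hp : ∀ x ∈ (p.map (Embedding.induce s).toHom).support, x ∈ s := by
    intro x hx
    rw [Walk.support_map, List.mem_map] at hx
    obtain ⟨y, -, rfl⟩ := hx
    exact y.2
  exact ⟨_, hp⟩

lemma IsAcyclic.support_subset_of_walk (hG : G.IsAcyclic) {u v : V} {p : G.Walk u v}
    (hp : p.IsPath) (w : G.Walk u v) : p.support ⊆ w.support := by
  classical
  have hpw : p = w.bypass :=
    congrArg Subtype.val ((hG.subsingleton_path u v).elim ⟨p, hp⟩ ⟨w.bypass, w.bypass_isPath⟩)
  exact hpw ▸ w.support_bypass_subset_support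

lemma IsAcyclic.support_subset_of_connected_induce (hG : G.IsAcyclic) {u v : V}
    {p : G.Walk u v} (hp : p.IsPath) (hs : (G.induce s).Connected) (hu : u ∈ s) (hv : v ∈ s) :
    ∀ x ∈ p.support, x ∈ s := by
  obtain ⟨w, hw⟩ := exists_walk_support_subset_of_connected_induce hs hu hv
  exact fun x hx => hw x (hG.support_subset_of_walk hp w hx)

lemma IsAcyclic.induce_inter_connected (hG : G.IsAcyclic) (hs : (G.induce s).Connected)
    (ht : (G.induce t).Connected) (hst : (s ∩ t).Nonempty) : (G.induce (s ∩ t)).Connected := by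
  classical
  have : Nonempty ↥(s ∩ t) := hst.to_subtype
  refine ⟨fun ⟨u, hu⟩ ⟨v, hv⟩ => ?_⟩
  obtain ⟨w, hw⟩ := exists_walk_support_subset_of_connected_induce hs hu.1 hv.1
  have hpt := hG.support_subset_of_connected_induce w.bypass_isPath ht hu.2 hv.2
  exact (w.bypass.induce (s ∩ t) fun x hx =>
    ⟨hw x (w.support_bypass_subset_support hx), hpt x hx⟩).reachable

/-- Every edge of a forest is a bridge, so an edge from `s \ t` to `t \ s` would close a cycle
through a common vertex of `s` and `t`. -/
lemma IsAcyclic.mem_or_mem_of_adj (hG : G.IsAcyclic) (hs : (G.induce s).Connected)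
    (ht : (G.induce t).Connected) (hst : (s ∩ t).Nonempty) {x y : V} (hx : x ∈ s) (hy : y ∈ t)
    (hxy : G.Adj x y) : x ∈ t ∨ y ∈ s := by
  obtain ⟨a, has, hat⟩ := hst
  obtain ⟨w₁, hw₁⟩ := exists_walk_support_subset_of_connected_induce hs hx has
  obtain ⟨w₂, hw₂⟩ := exists_walk_support_subset_of_connected_induce ht hat hy
  have hmem := isBridge_iff_forall_walk_mem_edges.mp
    (isAcyclic_iff_forall_adj_isBridge.mp hG hxy) (w₁.append w₂)
  rcases List.mem_append.mp (Walk.edges_append w₁ w₂ ▸ hmem) with h | h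
  · exact Or.inr (hw₁ y (w₁.snd_mem_support_of_mem_edges h))
  · exact Or.inl (hw₂ x (w₂.fst_mem_support_of_mem_edges h))

/-- The path from a point of `r ∩ t` to a point of `s ∩ t` stays in `t ∩ (r ∪ s)`; where it
leaves `r` it must already be in `s`. -/
lemma IsAcyclic.inter_inter_nonempty (hG : G.IsAcyclic) (hr : (G.induce r).Connected)
    (hs : (G.induce s).Connected) (ht : (G.induce t).Connected) (hrs : (r ∩ s).Nonempty)
    (hrt : (r ∩ t).Nonempty) (hst : (s ∩ t).Nonempty) : (r ∩ s ∩ t).Nonempty := by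
  classical
  obtain ⟨b, hbr, hbt⟩ := hrt
  obtain ⟨c, hcs, hct⟩ := hst
  by_cases hcr : c ∈ r
  · exact ⟨c, ⟨hcr, hcs⟩, hct⟩
  obtain ⟨w, hw⟩ := exists_walk_support_subset_of_connected_induce ht hbt hct
  set q := w.bypass
  have hqt : ∀ x ∈ q.support, x ∈ t := fun x hx => hw x (w.support_bypass_subset_support hx)
  have hqrs : ∀ x ∈ q.support, x ∈ r ∪ s := hG.support_subset_of_connected_induce
    w.bypass_isPath (induce_union_connected hr.preconnected hs.preconnected hrs)
    (Or.inl hbr) (Or.inr hcs)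
  obtain ⟨d, hd, hdr, hdr'⟩ := q.exists_boundary_dart r hbr hcr
  have hds : d.snd ∈ s := (hqrs _ (q.dart_snd_mem_support_of_mem_darts hd)).resolve_left hdr'
  have hfs : d.fst ∈ s := (hG.mem_or_mem_of_adj hr hs hrs hdr hds d.adj).resolve_right hdr'
  exact ⟨d.fst, ⟨hdr, hfs⟩, hqt _ (q.dart_fst_mem_support_of_mem_darts hd)⟩

lemma IsAcyclic.inter_sInter_nonempty (hG : G.IsAcyclic) {B : Set (Set V)} (hB : B.Finite)
    (hconn : ∀ s ∈ B, (G.induce s).Connected) (hpair : ∀ s ∈ B, ∀ t ∈ B, (s ∩ t).Nonempty)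
    (ht : (G.induce t).Connected) (htB : ∀ s ∈ B, (t ∩ s).Nonempty) : (t ∩ ⋂₀ B).Nonempty := by
  induction B, hB using Set.Finite.induction_on generalizing t with
  | empty => simpa using Set.nonempty_coe_sort.mp ht.nonempty
  | @insert s B _ _ ih =>
    have hts : (t ∩ s).Nonempty := htB s (Set.mem_insert s B)
    rw [Set.sInter_insert, ← Set.inter_assoc]
    refine ih (fun u hu => hconn u (Set.mem_insert_of_mem s hu))
      (fun u hu v hv => hpair u (Set.mem_insert_of_mem s hu) v (Set.mem_insert_of_mem s hv))
      (hG.induce_inter_connected ht (hconn s (Set.mem_insert s B)) hts) fun u hu => ?_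
    have hu' := Set.mem_insert_of_mem s hu
    exact hG.inter_inter_nonempty ht (hconn s (Set.mem_insert s B)) (hconn u hu') hts
      (htB u hu') (hpair s (Set.mem_insert s B) u hu')

lemma IsAcyclic.sInter_nonempty (hG : G.IsAcyclic) {B : Set (Set V)} (hB : B.Finite)
    (hne : B.Nonempty) (hconn : ∀ s ∈ B, (G.induce s).Connected)
    (hpair : ∀ s ∈ B, ∀ t ∈ B, (s ∩ t).Nonempty) : (⋂₀ B).Nonempty := by
  obtain ⟨t, ht⟩ := hne
  exact (hG.inter_sInter_nonempty hB hconn hpair (hconn t ht) (hpair t ht)).mono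
    Set.inter_subset_right

end SimpleGraph

section StrictBramble

variable {V : Type} {G : SimpleGraph V} {B : Set (Set V)}

lemma brOrder_le_ncard {X : Set V} (hX : Covers X B) : brOrder B ≤ X.ncard :=
  Nat.sInf_le ⟨X, hX, rfl⟩

lemma le_brOrder {n : ℕ} (hB : ∃ X : Set V, Covers X B)
    (h : ∀ X : Set V, Covers X B → n ≤ X.ncard) : n ≤ brOrder B := by
  obtain ⟨X, hX⟩ := hB
  refine le_csInf ⟨_, X, hX, rfl⟩ ?_
  rintro _ ⟨Y, hY, rfl⟩
  exact h Y hY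

lemma IsStrictBramble.covers_univ (hB : IsStrictBramble G B) : Covers Set.univ B :=
  fun S hS => (hB.2 S hS S hS).mono fun _ hx => ⟨hx.1, trivial⟩

lemma IsStrictBramble.brOrder_le_sbn [Finite V] (hB : IsStrictBramble G B) :
    brOrder B ≤ sbn G := by
  refine le_csSup ⟨Nat.card V, ?_⟩ ⟨B, hB, rfl⟩
  rintro _ ⟨B', hB', rfl⟩
  rw [← Set.ncard_univ]
  exact brOrder_le_ncard hB'.covers_univ

lemma IsAcyclic.sbn_le_one [Finite V] (hG : G.IsAcyclic) : sbn G ≤ 1 := by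
  refine csSup_le' ?_
  rintro _ ⟨B, hB, rfl⟩
  rcases B.eq_empty_or_nonempty with rfl | hne
  · exact (brOrder_le_ncard (X := ∅) fun S hS => hS.elim).trans (by simp)
  · obtain ⟨x, hx⟩ := hG.sInter_nonempty B.toFinite hne hB.1 hB.2
    exact (brOrder_le_ncard (X := {x}) fun S hS => ⟨x, hx S hS, rfl⟩).trans (by simp)

lemma two_le_sbn_of_inter_inter_eq_empty [Finite V] {a b c : Set V}
    (ha : (G.induce a).Connected) (hb : (G.induce b).Connected) (hc : (G.induce c).Connected)
    (hab : (a ∩ b).Nonempty) (hac : (a ∩ c).Nonempty) (hbc : (b ∩ c).Nonempty)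
    (habc : a ∩ b ∩ c = ∅) : 2 ≤ sbn G := by
  have hB : IsStrictBramble G {a, b, c} := by
    have hna := hab.mono Set.inter_subset_left
    have hnb := hbc.mono Set.inter_subset_left
    have hnc := hac.mono Set.inter_subset_right
    refine ⟨by simp [ha, hb, hc], ?_⟩
    simp only [Set.mem_insert_iff, Set.mem_singleton_iff]
    rintro S (rfl | rfl | rfl) S' (rfl | rfl | rfl) <;>
      first | rw [Set.inter_self]; assumption | assumption | rw [Set.inter_comm]; assumption
  refine le_trans (le_brOrder ⟨_, hB.covers_univ⟩ fun X hX => ?_) hB.brOrder_le_sbn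
  obtain ⟨x, hxa, hxX⟩ := hX a (by simp)
  obtain ⟨y, hyb, hyX⟩ := hX b (by simp)
  obtain ⟨z, hzc, hzX⟩ := hX c (by simp)
  by_contra! hX1
  have hsub := Set.ncard_le_one (Set.toFinite X) |>.mp (Nat.le_of_lt_succ hX1)
  have hx : x ∈ a ∩ b ∩ c := ⟨⟨hxa, hsub y hyX x hxX ▸ hyb⟩, hsub z hzX x hxX ▸ hzc⟩
  simp [habc] at hx

lemma two_le_sbn_of_not_isAcyclic [Finite V] (hG : ¬ G.IsAcyclic) : 2 ≤ sbn G := by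
  obtain ⟨v, c, hc⟩ : ∃ v, ∃ c : G.Walk v v, c.IsCycle := by
    simpa [IsAcyclic] using hG
  cases c with
  | nil => exact absurd hc Walk.not_isCycle_nil
  | @cons _ u _ h p =>
    obtain ⟨hp, hvu⟩ := (Walk.cons_isCycle_iff p h).mp hc
    cases p with
    | nil => exact absurd rfl h.ne
    | @cons _ w _ h' q =>
      obtain ⟨hq, huq⟩ := Walk.cons_isPath_iff h' q |>.mp hp
      have hwv : w ≠ v := by
        rintro rfl
        obtain rfl := (Walk.isPath_iff_nil.mp hq).eq_nil
        simp [Sym2.eq_swap] at hvu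
      refine two_le_sbn_of_inter_inter_eq_empty (induce_pair_connected_of_adj h)
        (induce_pair_connected_of_adj h') q.connected_induce_support
        ⟨u, by simp⟩ ⟨v, by simp⟩ ⟨w, by simp⟩ ?_
      refine Set.eq_empty_iff_forall_notMem.mpr fun z ⟨⟨hz, hz'⟩, hzq⟩ => ?_
      rcases hz with rfl | rfl
      · rcases hz' with rfl | rfl
        · exact h.ne rfl
        · exact hwv rfl
      · exact huq hzq

end StrictBramble

theorem sbn_le_one_iff_isAcyclic_general {V : Type} [Fintype V]
    (G : SimpleGraph V) : sbn G ≤ 1 ↔ G.IsAcyclic := by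
  refine ⟨fun h => ?_, IsAcyclic.sbn_le_one⟩
  by_contra hG
  have := two_le_sbn_of_not_isAcyclic hG
  omega

/-- a non-empty graph has `sbn ≤ 1` iff it is acyclic. -/
theorem sbn_le_one_iff_isAcyclic {V : Type} [Fintype V] [Nonempty V]
    (G : SimpleGraph V) : sbn G ≤ 1 ↔ G.IsAcyclic :=
  sbn_le_one_iff_isAcyclic_general G
end

section
/- If G and H are graphs with H a minor of G, and G has a lenient tree decomposition of width at most k, then H has a lenient tree decomposition of width at most k. -/
open SimpleGraph

/-! Contracting the branch sets of a minor model turns each bag of a lenient tree decomposition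
of `G` into the set of branch sets it meets. The nodes whose bags meet a connected branch set
form a union of subtrees, one per vertex of the branch set, in which the subtrees of adjacent
vertices contain close nodes; so they form a subtree. Distinct branch sets meeting a bag are
disjoint, which bounds the width. -/

namespace SimpleGraph

variable {α ι : Type} {T : SimpleGraph ι}

lemma connected_induce_union_of_close {s t : Set ι} {a b : ι} (hs : (T.induce s).Connected)
    (ht : (T.induce t).Connected) (ha : a ∈ s) (hb : b ∈ t) (hab : a = b ∨ T.Adj a b) :
    (T.induce (s ∪ t)).Connected := by
  rcases hab with rfl | hab
  · exact induce_union_connected hs.preconnected ht.preconnected ⟨a, ha, hb⟩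
  · exact connected_induce_union hs.preconnected ht.preconnected ha hb hab

lemma connected_induce_iUnion {K : SimpleGraph α} (hK : K.Connected) {f : α → Set ι}
    (hf : ∀ a, (T.induce (f a)).Connected)
    (hadj : ∀ a b, K.Adj a b → (T.induce (f a ∪ f b)).Connected) :
    (T.induce (⋃ a, f a)).Connected := by
  have reach : ∀ {a b : α} (_ : K.Walk a b) {u v : ι} (hu : u ∈ f a) (hv : v ∈ f b),
      (T.induce (⋃ a, f a)).Reachable ⟨u, Set.mem_iUnion_of_mem a hu⟩
        ⟨v, Set.mem_iUnion_of_mem b hv⟩ := by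
    intro a b p
    induction p with
    | nil =>
      intro u v hu hv
      exact ((hf _).preconnected ⟨u, hu⟩ ⟨v, hv⟩).map
        (induceHomOfLE T (Set.subset_iUnion f _)).toHom
    | cons hac _ ih =>
      intro u v hu hv
      obtain ⟨⟨w, hw⟩⟩ := (hf _).nonempty
      refine Reachable.trans ?_ (ih hw hv)
      exact ((hadj _ _ hac).preconnected ⟨u, .inl hu⟩ ⟨w, .inr hw⟩).map
        (induceHomOfLE T (Set.union_subset (Set.subset_iUnion f _) (Set.subset_iUnion f _))).toHom
  obtain ⟨a⟩ := hK.nonempty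
  obtain ⟨⟨u, hu⟩⟩ := (hf a).nonempty
  rw [connected_iff_exists_forall_reachable]
  refine ⟨⟨u, Set.mem_iUnion_of_mem a hu⟩, ?_⟩
  rintro ⟨v, hv⟩
  obtain ⟨b, hb⟩ := Set.mem_iUnion.1 hv
  exact reach (hK.preconnected a b).some hu hb

end SimpleGraph

open Function in
lemma Set.ncard_setOf_inter_nonempty_le {V W : Type} {μ : W → Set V}
    (hμ : Pairwise (Disjoint on μ)) {A : Set V} (hA : A.Finite) :
    {w | (μ w ∩ A).Nonempty}.ncard ≤ A.ncard := by
  have : Finite A := hA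
  rw [← Nat.card_coe_set_eq, ← Nat.card_coe_set_eq]
  refine Nat.card_le_card_of_injective
    (fun w => ⟨Set.Nonempty.some w.2, (Set.Nonempty.some_mem w.2).2⟩) ?_
  rintro ⟨w, hw⟩ ⟨w', hw'⟩ h
  by_contra hne
  have hsome : Set.Nonempty.some hw = Set.Nonempty.some hw' := congrArg Subtype.val h
  have hw'_some : Set.Nonempty.some hw ∈ μ w' := hsome ▸ (Set.Nonempty.some_mem hw').1
  exact Set.disjoint_left.1 (hμ fun e => hne (Subtype.ext e)) (Set.Nonempty.some_mem hw).1
    hw'_some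

namespace LenientTD

variable {V W : Type} {G : SimpleGraph V} {H : SimpleGraph W}

lemma exists_close_of_adj (D : LenientTD G) {x y : V} (h : G.Adj x y) :
    ∃ a b, x ∈ D.χ a ∧ y ∈ D.χ b ∧ (a = b ∨ D.T.Adj a b) := by
  obtain ⟨t, t', hc, hx | hx, hy | hy⟩ := D.edge_mem x y h
  exacts [⟨t, t, hx, hy, .inl rfl⟩, ⟨t, t', hx, hy, hc⟩,
    ⟨t', t, hx, hy, hc.imp Eq.symm Adj.symm⟩, ⟨t', t', hx, hy, .inl rfl⟩]

lemma connected_induce_setOf_inter_nonempty (D : LenientTD G) {X : Set V}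
    (hX : (G.induce X).Connected) : (D.T.induce {t | (X ∩ D.χ t).Nonempty}).Connected := by
  have hunion : {t | (X ∩ D.χ t).Nonempty} = ⋃ x : X, {t | x.1 ∈ D.χ t} := by
    ext t
    simp [Set.Nonempty]
  rw [hunion]
  refine connected_induce_iUnion hX (fun x => D.trace_conn x) fun x y hxy => ?_
  obtain ⟨a, b, ha, hb, hab⟩ := D.exists_close_of_adj hxy
  exact connected_induce_union_of_close (D.trace_conn x) (D.trace_conn y) ha hb hab

def ofMinorModel (D : LenientTD G) {μ : W → Set V} (hμ : IsMinorModel H G μ) :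
    LenientTD H where
  ι := D.ι
  T := D.T
  tree := D.tree
  χ t := {w | (μ w ∩ D.χ t).Nonempty}
  covers w := by
    obtain ⟨⟨t, ht⟩⟩ := (D.connected_induce_setOf_inter_nonempty (hμ.1 w)).nonempty
    exact ⟨t, ht⟩
  edge_mem w w' hww' := by
    obtain ⟨u, hu, v, hv, huv⟩ := hμ.2.2 w w' hww'
    obtain ⟨t, t', hc, hut, hvt⟩ := D.edge_mem u v huv
    exact ⟨t, t', hc, hut.imp (⟨u, hu, ·⟩) (⟨u, hu, ·⟩), hvt.imp (⟨v, hv, ·⟩) (⟨v, hv, ·⟩)⟩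
  trace_conn w := D.connected_induce_setOf_inter_nonempty (hμ.1 w)

lemma WidthLE.ofMinorModel [Finite V] {D : LenientTD G} {k : ℕ} (hD : D.WidthLE k)
    {μ : W → Set V} (hμ : IsMinorModel H G μ) : (D.ofMinorModel hμ).WidthLE k := fun t =>
  (Set.ncard_setOf_inter_nonempty_le
    (fun w w' h => Set.disjoint_iff_inter_eq_empty.2 (hμ.2.1 w w' h)) (Set.toFinite _)).trans
    (hD t)

end LenientTD

theorem lenientTD_minor_closed_general {V W : Type} [Fintype V]
    (G : SimpleGraph V) (H : SimpleGraph W) (hm : IsMinorOf H G) (k : ℕ)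
    (hG : ∃ D : LenientTD G, D.WidthLE k) :
    ∃ D : LenientTD H, D.WidthLE k := by
  obtain ⟨μ, hμ⟩ := hm
  obtain ⟨D, hD⟩ := hG
  exact ⟨D.ofMinorModel hμ, hD.ofMinorModel hμ⟩

/-- lenient tree decompositions of width at most `k` are inherited
by minors. -/
theorem lenientTD_minor_closed {V W : Type} [Fintype V] [Fintype W]
    (G : SimpleGraph V) (H : SimpleGraph W) (hm : IsMinorOf H G) (k : ℕ)
    (hG : ∃ D : LenientTD G, D.WidthLE k) :
    ∃ D : LenientTD H, D.WidthLE k :=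
  lenientTD_minor_closed_general G H hm k hG
end
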